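/- For every integer p ≥ 1 and every n ≥ 1, the characteristic polynomial P_n of A_n factors as P_n = (X − 2p) · ∏_{i=0}^{n−1} (F_p^{∘i} + 2) · ∏_{i=0}^{n−1} (F_p^{∘i} − 2(p−1))^{(p−1)(p+1)^{n−i−1}}, where F_p = X² − 2(p−1)X − 2p ∈ ℝ[X] and F_p^{∘i} denotes the i-fold composition of F_p with itself (F_p^{∘0} = X). -/

import Mathlib

open Polynomial Matrix

/-- The action of the generator `e_i` of the star automaton group `𝒢_{S_p}` on
words of length `n` over the alphabet `X = {0, 1, …, p}`. -/
def starWord (p : ℕ) (i : Fin (p + 1)) : (n : ℕ) → (Fin n → Fin (p + 1)) → Fin n → Fin (p + 1)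
  | 0, w => w
  | n + 1, w =>
    if w 0 = 0 then Fin.cons i (starWord p i n (Fin.tail w))
    else if w 0 = i then Fin.cons 0 (Fin.tail w)
    else w

/-- The real permutation matrix of `e_i^{(n)}`. -/
noncomputable def starMat (p n : ℕ) (i : Fin (p + 1)) :
    Matrix (Fin n → Fin (p + 1)) (Fin n → Fin (p + 1)) ℝ :=
  fun u v => if starWord p i n u = v then 1 else 0

/-- The adjacency matrix `A_n = Σ_{i=1}^p (M_{i,n} + M_{i,n}ᵀ)` of the `n`-th
Schreier graph of the star automaton group `𝒢_{S_p}`. -/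
noncomputable def starAdj (p n : ℕ) :
    Matrix (Fin n → Fin (p + 1)) (Fin n → Fin (p + 1)) ℝ :=
  ∑ i : Fin p, (starMat p n i.succ + (starMat p n i.succ)ᵀ)

/-- The `i`-fold composition `F^{∘i}` of a polynomial with itself, with `F^{∘0} = X`. -/
noncomputable def polyIter (F : Polynomial ℝ) : ℕ → Polynomial ℝ
  | 0 => X
  | n + 1 => F.comp (polyIter F n)

/-!
Splitting a word of length `n + 1` at its first letter (`0` or `j + 1`, with `j < p`) puts
`A_{n+1}` in the block form `[[0, B], [Bᵀ, 2(p-1)]]`, where `B u (j, v) = (M_{j+1,n} + 1) u v`.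
Since the `M_{i,n}` are permutation matrices, `B Bᵀ = 2p + A_n`, and a Schur complement computation
gives `P_{n+1} = P_n ∘ F_p · (X - 2(p-1))^{(p-1)(p+1)^n}`. Iterating from `P_0 = X - 2p` and using
`F_p - 2p = (X - 2p)(X + 2)` yields the product formula.
-/

namespace Matrix

variable {R : Type*} [CommRing R] {m k : Type*} [Fintype m] [DecidableEq m] [Fintype k]
  [DecidableEq k]

theorem charpoly_comp_eq_det (M : Matrix m m R) (q : R[X]) :
    M.charpoly.comp q = (scalar m q - M.map C).det := by
  rw [comp_eq_aeval, charpoly, AlgHom.map_det]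
  congr 1
  ext i j
  by_cases h : i = j <;> simp [h]

theorem charpoly_scalar_add (M : Matrix m m R) (a : R) :
    (scalar m a + M).charpoly = M.charpoly.comp (X - C a) := by
  rw [add_comm, ← sub_neg_eq_add, ← map_neg, charpoly_sub_scalar, map_neg, ← sub_eq_add_neg]

theorem charpoly_submatrix_equiv (M : Matrix m m R) (e : k ≃ m) :
    (M.submatrix e e).charpoly = M.charpoly := by
  simpa using charpoly_reindex e.symm M

theorem charpoly_fromBlocks_zero_scalar (B : Matrix m k R) (D : Matrix k m R) (c : R) :
    (fromBlocks 0 B D (scalar k c)).charpoly * (X - C c) ^ Fintype.card m =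
      (B * D).charpoly.comp (X * (X - C c)) * (X - C c) ^ Fintype.card k := by
  -- Column operations by `E` make the characteristic matrix block triangular, with the Schur
  -- complement `X (X - c) - B D` in the upper left corner.
  set E := fromBlocks (scalar m (X - C c)) 0 (D.map C) (1 : Matrix k k R[X])
  have hE : E.det = (X - C c) ^ Fintype.card m := by simp [E]
  have key : charmatrix (fromBlocks 0 B D (scalar k c)) * E =
      fromBlocks (scalar m (X * (X - C c)) - (B * D).map C) (-B.map C) 0 (scalar k (X - C c)) := by
    rw [charmatrix_fromBlocks, fromBlocks_multiply]
    congr 1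
    · simp [charmatrix, mul_sub, ← sub_eq_add_neg]
    · simp
    · ext i j
      simp [charmatrix, mul_comm]
    · simp [charmatrix]
  rw [charpoly, ← hE, ← det_mul, key, det_fromBlocks_zero₂₁, charpoly_comp_eq_det]
  simp

end Matrix

theorem Fintype.sum_ite_eq_zero_else_const {ι R : Type*} [Fintype ι] [DecidableEq ι] [Ring R]
    (k : ι) (c : R) : ∑ x, (if k = x then 0 else c) = (Fintype.card ι - 1) * c := by
  simp [Finset.sum_ite, Finset.filter_ne, Finset.card_erase_of_mem,
    Nat.cast_sub (Fintype.card_pos_iff.mpr ⟨k⟩)]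

namespace Fin

theorem swap_zero_succ_apply_succ {p : ℕ} (j k : Fin p) :
    Equiv.swap 0 j.succ k.succ = if k = j then 0 else k.succ := by
  split_ifs with h
  · rw [h, Equiv.swap_apply_right]
  · exact Equiv.swap_apply_of_ne_of_ne (succ_ne_zero k) (succ_inj.ne.mpr h)

@[simp] theorem swap_zero_succ_apply_succ_eq_zero {p : ℕ} (j k : Fin p) :
    Equiv.swap 0 j.succ k.succ = 0 ↔ k = j := by
  rw [swap_zero_succ_apply_succ]; split_ifs <;> simp [*, succ_ne_zero]

@[simp] theorem swap_zero_succ_apply_succ_eq_succ {p : ℕ} (j k l : Fin p) :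
    Equiv.swap 0 j.succ k.succ = l.succ ↔ k ≠ j ∧ k = l := by
  rw [swap_zero_succ_apply_succ]; split_ifs <;> simp [*, (succ_ne_zero _).symm]

end Fin

section StarAutomaton

variable {p : ℕ}

theorem starWord_cons (i : Fin (p + 1)) (n : ℕ) (x : Fin (p + 1)) (u : Fin n → Fin (p + 1)) :
    starWord p i (n + 1) (Fin.cons x u) =
      Fin.cons (Equiv.swap 0 i x) (if x = 0 then starWord p i n u else u) := by
  by_cases hx : x = 0
  · subst hx; simp [starWord]
  by_cases hi : x = i
  · subst hi; simp [starWord, hx]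
  · simp [starWord, hx, hi, Equiv.swap_apply_of_ne_of_ne]

theorem starWord_injective (i : Fin (p + 1)) : ∀ n, Function.Injective (starWord p i n)
  | 0 => fun _ _ h => h
  | n + 1 => by
    intro u v h
    rw [← Fin.cons_self_tail u, ← Fin.cons_self_tail v, starWord_cons, starWord_cons,
      Fin.cons_inj] at h
    obtain ⟨hhead, htail⟩ := h
    have h0 : u 0 = v 0 := (Equiv.swap 0 i).injective hhead
    rw [← Fin.cons_self_tail u, ← Fin.cons_self_tail v, h0]
    by_cases hv : v 0 = 0
    · simp only [h0, hv, if_true] at htail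
      rw [starWord_injective i n htail]
    · simp only [h0, hv, if_false] at htail
      rw [htail]

theorem starMat_succ_cons_cons (n : ℕ) (i x y : Fin (p + 1)) (u v : Fin n → Fin (p + 1)) :
    starMat p (n + 1) i (Fin.cons x u) (Fin.cons y v) =
      if Equiv.swap 0 i x = y then
        (if x = 0 then starMat p n i u v else (1 : Matrix _ _ ℝ) u v)
      else 0 := by
  simp only [starMat, starWord_cons, Fin.cons_inj, one_apply]
  split_ifs <;> simp_all

theorem starMat_mul_transpose (n : ℕ) (i : Fin (p + 1)) :
    starMat p n i * (starMat p n i)ᵀ = 1 := by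
  ext u v
  simp [mul_apply, starMat, one_apply, (starWord_injective i n).eq_iff, eq_comm]

theorem starAdj_apply (n : ℕ) (u v : Fin n → Fin (p + 1)) :
    starAdj p n u v = ∑ j : Fin p, (starMat p n j.succ u v + starMat p n j.succ v u) := by
  simp [starAdj, Matrix.sum_apply]

theorem charpoly_starAdj_zero : (starAdj p 0).charpoly = X - C (2 * (p : ℝ)) := by
  have hdiag (u : Fin 0 → Fin (p + 1)) : starAdj p 0 u u = 2 * p := by
    simp [starAdj_apply, starMat, starWord]; ring
  rw [charpoly, det_unique, charmatrix_apply_eq, hdiag]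

variable (p) in
def wordSuccEquiv (n : ℕ) :
    (Fin n → Fin (p + 1)) ⊕ Fin p × (Fin n → Fin (p + 1)) ≃ (Fin (n + 1) → Fin (p + 1)) :=
  optionProdEquiv.symm.trans <| (Equiv.prodCongr (finSuccEquiv p).symm (Equiv.refl _)).trans <|
    Fin.consEquiv fun _ => Fin (p + 1)

@[simp] theorem wordSuccEquiv_inl (n : ℕ) (u : Fin n → Fin (p + 1)) :
    wordSuccEquiv p n (Sum.inl u) = Fin.cons 0 u := by
  simp [wordSuccEquiv]; rfl

@[simp] theorem wordSuccEquiv_inr (n : ℕ) (j : Fin p) (u : Fin n → Fin (p + 1)) :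
    wordSuccEquiv p n (Sum.inr (j, u)) = Fin.cons j.succ u := by
  simp [wordSuccEquiv]; rfl

variable (p) in
noncomputable def starB (n : ℕ) :
    Matrix (Fin n → Fin (p + 1)) (Fin p × (Fin n → Fin (p + 1))) ℝ :=
  of fun u x => (starMat p n x.1.succ + 1) u x.2

theorem starAdj_succ_submatrix (n : ℕ) :
    (starAdj p (n + 1)).submatrix (wordSuccEquiv p n) (wordSuccEquiv p n) =
      fromBlocks 0 (starB p n) (starB p n)ᵀ (scalar _ (2 * ((p : ℝ) - 1))) := by
  ext (u | ⟨k, u⟩) (v | ⟨l, v⟩)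
  · simp [starAdj_apply, starMat_succ_cons_cons]
  · simp [starAdj_apply, starMat_succ_cons_cons, starB,
      Finset.sum_add_distrib, one_apply, eq_comm (a := v)]
  · simp [starAdj_apply, starMat_succ_cons_cons, starB,
      Finset.sum_add_distrib, one_apply, eq_comm (a := v), add_comm]
  · by_cases hkl : (k, u) = (l, v)
    · obtain ⟨rfl, rfl⟩ := Prod.ext_iff.mp hkl
      simp [starAdj_apply, starMat_succ_cons_cons, Finset.sum_add_distrib,
        Fintype.sum_ite_eq_zero_else_const]
      ring
    · rw [Prod.mk.injEq, not_and_or] at hkl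
      rcases hkl with h | h <;>
        simp [starAdj_apply, starMat_succ_cons_cons, one_apply, h, Ne.symm h]

theorem starB_mul_transpose (n : ℕ) :
    starB p n * (starB p n)ᵀ = scalar _ (2 * (p : ℝ)) + starAdj p n := by
  have hsum : starB p n * (starB p n)ᵀ =
      ∑ j : Fin p, (starMat p n j.succ + 1) * (starMat p n j.succ + 1)ᵀ := by
    ext u v
    simp only [mul_apply, Matrix.sum_apply, Fintype.sum_prod_type, starB, of_apply,
      transpose_apply]
  have hterm (j : Fin p) : (starMat p n j.succ + 1) * (starMat p n j.succ + 1)ᵀ =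
      scalar _ 2 + (starMat p n j.succ + (starMat p n j.succ)ᵀ) := by
    rw [transpose_add, transpose_one, add_mul, mul_add, mul_add, starMat_mul_transpose,
      Matrix.mul_one, Matrix.one_mul, Matrix.mul_one, ← one_add_one_eq_two, map_add, map_one]
    abel
  rw [hsum, Finset.sum_congr rfl fun j _ => hterm j, Finset.sum_add_distrib, starAdj]
  congr 1
  rw [Finset.sum_const, Finset.card_univ, Fintype.card_fin, ← map_nsmul, nsmul_eq_mul, mul_comm]

theorem charpoly_starAdj_succ (hp : 1 ≤ p) (n : ℕ) :
    (starAdj p (n + 1)).charpoly =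
      (starAdj p n).charpoly.comp (X ^ 2 - C (2 * ((p : ℝ) - 1)) * X - C (2 * (p : ℝ))) *
        (X - C (2 * ((p : ℝ) - 1))) ^ ((p - 1) * (p + 1) ^ n) := by
  have hblock := charpoly_fromBlocks_zero_scalar (starB p n) (starB p n)ᵀ (2 * ((p : ℝ) - 1))
  rw [← starAdj_succ_submatrix, charpoly_submatrix_equiv, starB_mul_transpose,
    charpoly_scalar_add, comp_assoc, sub_comp, X_comp, C_comp] at hblock
  have hcard : Fintype.card (Fin p × (Fin n → Fin (p + 1))) =
      (p - 1) * (p + 1) ^ n + Fintype.card (Fin n → Fin (p + 1)) := by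
    simp only [Fintype.card_prod, Fintype.card_fin, Fintype.card_fun]
    nth_rw 1 [← Nat.sub_add_cancel hp]
    ring
  rw [hcard, pow_add, ← mul_assoc] at hblock
  convert mul_right_cancel₀ (pow_ne_zero _ (X_sub_C_ne_zero _)) hblock using 3
  ring

end StarAutomaton

section PolyIter

variable {F : ℝ[X]}

theorem polyIter_succ_eq_comp (n : ℕ) : polyIter F (n + 1) = (polyIter F n).comp F := by
  induction n with
  | zero => simp [polyIter]
  | succ n ih =>
    show F.comp (polyIter F (n + 1)) = (F.comp (polyIter F n)).comp F
    rw [ih, comp_assoc]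

theorem polyIter_sub_C_eq_mul_prod {a b : ℝ} (hF : F - C a = (X - C a) * (X + C b)) (n : ℕ) :
    polyIter F n - C a = (X - C a) * ∏ i ∈ Finset.range n, (polyIter F i + C b) := by
  induction n with
  | zero => simp [polyIter]
  | succ n ih =>
    have hstep : polyIter F (n + 1) - C a = (polyIter F n - C a) * (polyIter F n + C b) := by
      simpa [polyIter] using congrArg (·.comp (polyIter F n)) hF
    rw [hstep, ih, Finset.prod_range_succ, mul_assoc]

theorem eq_comp_polyIter_mul_prod {Q : ℕ → ℝ[X]} {G : ℝ[X]} {e : ℕ → ℕ}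
    (hQ : ∀ n, Q (n + 1) = (Q n).comp F * G ^ e n) (n : ℕ) :
    Q n = (Q 0).comp (polyIter F n) *
      ∏ i ∈ Finset.range n, (G.comp (polyIter F i)) ^ e (n - i - 1) := by
  induction n with
  | zero => simp [polyIter]
  | succ n ih =>
    rw [hQ, ih, mul_comp, comp_assoc, ← polyIter_succ_eq_comp, prod_comp, Finset.prod_range_succ']
    simp only [pow_comp, comp_assoc, ← polyIter_succ_eq_comp, polyIter, comp_X,
      Nat.add_sub_add_right, Nat.sub_zero, Nat.add_sub_cancel, mul_assoc]

end PolyIter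

theorem stmt3_general (p : ℕ) (hp : 1 ≤ p) (n : ℕ) :
    (starAdj p n).charpoly =
      (X - C (2 * (p : ℝ))) *
        (∏ i ∈ Finset.range n,
          (polyIter (X ^ 2 - C (2 * ((p : ℝ) - 1)) * X - C (2 * (p : ℝ))) i + C 2)) *
        (∏ i ∈ Finset.range n,
          (polyIter (X ^ 2 - C (2 * ((p : ℝ) - 1)) * X - C (2 * (p : ℝ))) i
              - C (2 * ((p : ℝ) - 1))) ^ ((p - 1) * (p + 1) ^ (n - i - 1))) := by
  have hfactor : (X ^ 2 - C (2 * ((p : ℝ) - 1)) * X - C (2 * (p : ℝ))) - C (2 * (p : ℝ)) =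
      (X - C (2 * (p : ℝ))) * (X + C 2) := by
    simp only [map_mul, map_sub, map_natCast, map_one, map_ofNat]
    ring
  rw [eq_comp_polyIter_mul_prod (Q := fun n => (starAdj p n).charpoly) (charpoly_starAdj_succ hp),
    charpoly_starAdj_zero, sub_comp, X_comp, C_comp, polyIter_sub_C_eq_mul_prod hfactor]
  simp only [sub_comp, X_comp, C_comp]

/-- For every `p ≥ 1` and `n ≥ 1`, with `F_p = X² − 2(p−1)X − 2p`:
`P_n = (X − 2p) · ∏_{i=0}^{n−1} (F_p^{∘i} + 2) · ∏_{i=0}^{n−1} (F_p^{∘i} − 2(p−1))^{(p−1)(p+1)^{n−i−1}}`. -/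
theorem stmt3 (p : ℕ) (hp : 1 ≤ p) (n : ℕ) (hn : 1 ≤ n) :
    (starAdj p n).charpoly =
      (X - C (2 * (p : ℝ))) *
        (∏ i ∈ Finset.range n,
          (polyIter (X ^ 2 - C (2 * ((p : ℝ) - 1)) * X - C (2 * (p : ℝ))) i + C 2)) *
        (∏ i ∈ Finset.range n,
          (polyIter (X ^ 2 - C (2 * ((p : ℝ) - 1)) * X - C (2 * (p : ℝ))) i
              - C (2 * ((p : ℝ) - 1))) ^ ((p - 1) * (p + 1) ^ (n - i - 1))) :=
  stmt3_general p hp n
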